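/- Let μ̂ > 0 with μ̂ ∉ Spec(T)\Λ, and let φ̂ ∈ V. Then ‖(I−S)φ̂‖_B ≤ C(μ̂,Λ) · ‖φ̂ − μ̂ T⁻¹ φ̂‖_B. -/

import Mathlib

open scoped RealInnerProductSpace

noncomputable section

variable {V : Type*} [NormedAddCommGroup V] [InnerProductSpace ℝ V]

/-- `Spec(T)`: the set of eigenvalues of `T`. -/
def specSet (T : V →ₗ[ℝ] V) : Set ℝ := {μ : ℝ | Module.End.HasEigenvalue T μ}

/-- `E(Λ)`: the sum of the eigenspaces of `T` corresponding to eigenvalues in `Λ`. -/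
def ESub (T : V →ₗ[ℝ] V) (Λ : Set ℝ) : Submodule ℝ V :=
  ⨆ μ ∈ Λ, Module.End.eigenspace T μ

/-- `C(μ̂, Λ) = max_{ξ ∈ (Spec(T)\Λ) ∪ {0}} ξ / |ξ - μ̂|`. -/
def Cconst (T : V →ₗ[ℝ] V) (Λ : Set ℝ) (μ : ℝ) : ℝ :=
  sSup ((fun ξ => ξ / |ξ - μ|) '' ((specSet T \ Λ) ∪ {0}))

/-- Squared energy norm `‖v‖_B² = B(v,v) = ⟪T v, v⟫`. -/
def enormSq (T : V →ₗ[ℝ] V) (v : V) : ℝ := ⟪T v, v⟫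

/-- Energy norm `‖v‖_B = B(v,v)^{1/2}`. -/
def enorm (T : V →ₗ[ℝ] V) (v : V) : ℝ := Real.sqrt ⟪T v, v⟫

/-- `S`: the orthogonal projection of `V` onto `E(Λ)`, as an endomorphism of `V`. -/
def Sproj [FiniteDimensional ℝ V] (T : V →ₗ[ℝ] V) (Λ : Set ℝ) : V →ₗ[ℝ] V :=
  (ESub T Λ).subtype ∘ₗ (ESub T Λ).orthogonalProjectionOnto.toLinearMap

/-!
Expand in an orthonormal eigenbasis `bᵢ` of `T`, with eigenvalues `ξᵢ > 0`, and put
`cᵢ = ⟪bᵢ, φ⟫`. Then `‖v‖_B² = ∑ ξᵢ ⟪bᵢ, v⟫²`. Since eigenspaces of distinct eigenvalues are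
orthogonal, the coordinates of `(I - S)φ` are `cᵢ` for `ξᵢ ∉ Λ` and `0` for `ξᵢ ∈ Λ`, while those of
`φ - μ T⁻¹φ` are `(ξᵢ - μ) / ξᵢ · cᵢ`. The squared estimate then holds term by term, because
`ξ ≤ C(μ, Λ) |ξ - μ|` for every `ξ ∈ Spec(T) \ Λ`.
-/

open Module.End

lemma eigenspace_le_ESub {T : V →ₗ[ℝ] V} {Λ : Set ℝ} {ξ : ℝ} (hξ : ξ ∈ Λ) :
    eigenspace T ξ ≤ ESub T Λ :=
  le_iSup₂ (f := fun ξ (_ : ξ ∈ Λ) => eigenspace T ξ) ξ hξ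

lemma LinearMap.IsSymmetric.eigenspace_isOrtho_ESub {T : V →ₗ[ℝ] V} (hT : T.IsSymmetric)
    {Λ : Set ℝ} {ξ : ℝ} (hξ : ξ ∉ Λ) : eigenspace T ξ ⟂ ESub T Λ :=
  Submodule.isOrtho_iSup_right.2 fun _ => Submodule.isOrtho_iSup_right.2 fun hν =>
    hT.orthogonalFamily_eigenspaces.isOrtho fun h => hξ (h ▸ hν)

lemma Module.End.HasEigenvalue.pos_of_inner_pos {T : V →ₗ[ℝ] V} {ξ : ℝ}
    (hξ : HasEigenvalue T ξ) (hpos : ∀ v : V, v ≠ 0 → 0 < ⟪T v, v⟫) : 0 < ξ := by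
  obtain ⟨v, hv, hv0⟩ := hξ.exists_hasEigenvector
  have h := hpos v hv0
  rw [mem_eigenspace_iff.1 hv, real_inner_smul_left] at h
  exact pos_of_mul_pos_left h real_inner_self_nonneg

section FiniteDimensional

variable [FiniteDimensional ℝ V]

lemma Cconst_image_bddAbove (T : V →ₗ[ℝ] V) (Λ : Set ℝ) (μ : ℝ) :
    BddAbove ((fun ξ => ξ / |ξ - μ|) '' ((specSet T \ Λ) ∪ {0})) :=
  ((((finite_hasEigenvalue T).sdiff (t := Λ)).union (Set.finite_singleton 0)).image _).bddAbove

lemma Cconst_nonneg (T : V →ₗ[ℝ] V) (Λ : Set ℝ) (μ : ℝ) : 0 ≤ Cconst T Λ μ := by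
  have h : 0 / |0 - μ| ≤ Cconst T Λ μ :=
    le_csSup (Cconst_image_bddAbove T Λ μ) (Set.mem_image_of_mem _ (Or.inr rfl))
  rwa [zero_div] at h

lemma le_Cconst_mul_abs {T : V →ₗ[ℝ] V} {Λ : Set ℝ} {μ ξ : ℝ} (hξ : ξ ∈ specSet T \ Λ)
    (hξμ : ξ ≠ μ) : ξ ≤ Cconst T Λ μ * |ξ - μ| := by
  rw [← div_le_iff₀ (abs_pos.mpr (sub_ne_zero.mpr hξμ))]
  exact le_csSup (Cconst_image_bddAbove T Λ μ) (Set.mem_image_of_mem _ (Or.inl hξ))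

lemma Sproj_mem (T : V →ₗ[ℝ] V) (Λ : Set ℝ) (v : V) : Sproj T Λ v ∈ ESub T Λ :=
  ((ESub T Λ).orthogonalProjectionOnto v).2

lemma sub_Sproj_mem_orthogonal (T : V →ₗ[ℝ] V) (Λ : Set ℝ) (v : V) :
    v - Sproj T Λ v ∈ (ESub T Λ)ᗮ :=
  (ESub T Λ).sub_starProjection_mem_orthogonal v

namespace LinearMap.IsSymmetric

variable {T : V →ₗ[ℝ] V} (hT : T.IsSymmetric) {n : ℕ} (hn : Module.finrank ℝ V = n)

lemma enormSq_eq_sum (v : V) :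
    enormSq T v = ∑ i, hT.eigenvalues hn i * (hT.eigenvectorBasis hn).repr v i ^ 2 := by
  rw [enormSq, ← (hT.eigenvectorBasis hn).sum_inner_mul_inner]
  refine Finset.sum_congr rfl fun i _ => ?_
  rw [real_inner_comm, ← OrthonormalBasis.repr_apply_apply, ← OrthonormalBasis.repr_apply_apply,
    hT.eigenvectorBasis_apply_self_apply, RCLike.ofReal_real_eq_id, id_eq]
  ring

lemma repr_sub_Sproj_of_mem {Λ : Set ℝ} (v : V) {i : Fin n} (hi : hT.eigenvalues hn i ∈ Λ) :
    (hT.eigenvectorBasis hn).repr (v - Sproj T Λ v) i = 0 := by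
  rw [OrthonormalBasis.repr_apply_apply, real_inner_comm]
  exact (Submodule.mem_orthogonal' _ _).1 (sub_Sproj_mem_orthogonal T Λ v) _
    (eigenspace_le_ESub hi (hT.hasEigenvector_eigenvectorBasis hn i).1)

lemma repr_sub_Sproj_of_notMem {Λ : Set ℝ} (v : V) {i : Fin n} (hi : hT.eigenvalues hn i ∉ Λ) :
    (hT.eigenvectorBasis hn).repr (v - Sproj T Λ v) i = (hT.eigenvectorBasis hn).repr v i := by
  rw [map_sub, PiLp.sub_apply, sub_eq_self, OrthonormalBasis.repr_apply_apply]
  exact Submodule.isOrtho_iff_inner_eq.1 (hT.eigenspace_isOrtho_ESub hi) _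
    (hT.hasEigenvector_eigenvectorBasis hn i).1 _ (Sproj_mem T Λ v)

lemma repr_sub_smul_of_apply_eq {v w : V} (hw : T w = v) (μ : ℝ) {i : Fin n}
    (hi : hT.eigenvalues hn i ≠ 0) :
    (hT.eigenvectorBasis hn).repr (v - μ • w) i =
      (hT.eigenvalues hn i - μ) / hT.eigenvalues hn i * (hT.eigenvectorBasis hn).repr v i := by
  have hv := hT.eigenvectorBasis_apply_self_apply hn w i
  rw [hw, RCLike.ofReal_real_eq_id, id_eq] at hv
  rw [map_sub, map_smul, PiLp.sub_apply, PiLp.smul_apply, hv, smul_eq_mul]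
  field_simp

end LinearMap.IsSymmetric

lemma enormSq_sub_Sproj_le {T Tinv : V →ₗ[ℝ] V} (hT : T.IsSymmetric)
    (hpos : ∀ v : V, v ≠ 0 → 0 < ⟪T v, v⟫) (hTinv : ∀ v, T (Tinv v) = v) {Λ : Set ℝ} {μ : ℝ}
    (hμ : μ ∉ specSet T \ Λ) (φ : V) :
    enormSq T (φ - Sproj T Λ φ) ≤ Cconst T Λ μ ^ 2 * enormSq T (φ - μ • Tinv φ) := by
  have hn : Module.finrank ℝ V = Module.finrank ℝ V := rfl
  rw [hT.enormSq_eq_sum hn, hT.enormSq_eq_sum hn, Finset.mul_sum]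
  refine Finset.sum_le_sum fun i _ => ?_
  set ξ := hT.eigenvalues hn i
  set c := (hT.eigenvectorBasis hn).repr φ i
  have hξ_eig : HasEigenvalue T ξ := hT.hasEigenvalue_eigenvalues hn i
  have hξ_pos : 0 < ξ := hξ_eig.pos_of_inner_pos hpos
  rw [hT.repr_sub_smul_of_apply_eq hn (hTinv φ) μ hξ_pos.ne']
  by_cases hi : ξ ∈ Λ
  · rw [hT.repr_sub_Sproj_of_mem hn φ hi, zero_pow two_ne_zero, mul_zero]
    positivity
  rw [hT.repr_sub_Sproj_of_notMem hn φ hi]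
  have hξ_le : ξ ≤ Cconst T Λ μ * |ξ - μ| :=
    le_Cconst_mul_abs ⟨hξ_eig, hi⟩ fun h => hμ (h ▸ ⟨hξ_eig, hi⟩)
  calc ξ * c ^ 2 = ξ ^ 2 * c ^ 2 / ξ := by field_simp
    _ ≤ (Cconst T Λ μ * |ξ - μ|) ^ 2 * c ^ 2 / ξ := by gcongr
    _ = Cconst T Λ μ ^ 2 * (ξ * ((ξ - μ) / ξ * c) ^ 2) := by
        rw [mul_pow, sq_abs]
        field_simp

end FiniteDimensional

theorem stmt_5_general [FiniteDimensional ℝ V]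
    (T Tinv : V →ₗ[ℝ] V) (hTsymm : T.IsSymmetric)
    (hTpos : ∀ v : V, v ≠ 0 → 0 < ⟪T v, v⟫)
    (hTinv₁ : ∀ v, T (Tinv v) = v)
    (Λ : Set ℝ)
    (μ : ℝ) (hμ : μ ∉ specSet T \ Λ)
    (φ : V) :
    enorm T (φ - Sproj T Λ φ) ≤ Cconst T Λ μ * enorm T (φ - μ • Tinv φ) :=
  calc enorm T (φ - Sproj T Λ φ) = √(enormSq T (φ - Sproj T Λ φ)) := rfl
    _ ≤ √(Cconst T Λ μ ^ 2 * enormSq T (φ - μ • Tinv φ)) :=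
        Real.sqrt_le_sqrt (enormSq_sub_Sproj_le hTsymm hTpos hTinv₁ hμ φ)
    _ = Cconst T Λ μ * enorm T (φ - μ • Tinv φ) := by
        rw [Real.sqrt_mul (sq_nonneg _), Real.sqrt_sq (Cconst_nonneg T Λ μ)]
        rfl

/-- estimate (2.3) in the energy norm:
`‖(I−S)φ̂‖_B ≤ C(μ̂,Λ) · ‖φ̂ − μ̂ T⁻¹ φ̂‖_B`. -/
theorem stmt_5 [FiniteDimensional ℝ V]
    (T Tinv : V →ₗ[ℝ] V) (hTsymm : T.IsSymmetric)
    (hTpos : ∀ v : V, v ≠ 0 → 0 < ⟪T v, v⟫)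
    (hTinv₁ : ∀ v, T (Tinv v) = v) (hTinv₂ : ∀ v, Tinv (T v) = v)
    (Λ : Set ℝ) (hΛ : Λ ⊆ specSet T)
    (μ : ℝ) (hμpos : 0 < μ) (hμ : μ ∉ specSet T \ Λ)
    (φ : V) :
    enorm T (φ - Sproj T Λ φ) ≤ Cconst T Λ μ * enorm T (φ - μ • Tinv φ) :=
  stmt_5_general T Tinv hTsymm hTpos hTinv₁ Λ μ hμ φ
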